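/- Rank-k mixed update/downdate with equal counts: In the mixed setting with k_u = k_d = k (so n₂ = n₁ = n), setting z = (x̄₁ + x̄₂)/2, K_u = Y_u − z·1ₖᵀ, and K_d = Y_d − z·1ₖᵀ, one has (n−1)·S₂ = (n−1)·S₁ + K_uK_uᵀ − K_dK_dᵀ. -/

import Mathlib

/-!
Write `scatter Z c = ∑ⱼ (zⱼ - c)(zⱼ - c)ᵀ` for the scatter of the columns of `Z` about `c`, so that
`(N - 1) • sampleCov Z` is the scatter about the mean. The scatter is additive over a splitting
of the columns, so about any common centre `z` the scatters of `X₂` and `X₁` differ exactly by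
`scatter Y_u z - scatter Y_d z = K_u K_uᵀ - K_d K_dᵀ`. Moving the centre from the mean `x̄` to `z`
adds `N (x̄ - z)(x̄ - z)ᵀ` (parallel axis theorem); for the midpoint `z` of `x̄₁` and `x̄₂` and
equal column counts this correction is the same for `X₁` and `X₂`, so it cancels.
-/

open Matrix

/-- Sample covariance (with Bessel's correction) of an m×N data matrix. -/
noncomputable def sampleCov {m : ℕ} {ι : Type*} [Fintype ι]
    (Z : Matrix (Fin m) ι ℝ) : Matrix (Fin m) (Fin m) ℝ :=
  ((Fintype.card ι : ℝ) - 1)⁻¹ •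
    ((Matrix.of fun i j => Z i j - (∑ l, Z i l) / (Fintype.card ι : ℝ)) *
      (Matrix.of fun i j => Z i j - (∑ l, Z i l) / (Fintype.card ι : ℝ))ᵀ)

open Finset

variable {R ρ ι κ : Type*}

section Scatter

variable [Field R]

def rowMean [Fintype ι] (Z : Matrix ρ ι R) (i : ρ) : R :=
  (∑ j, Z i j) / Fintype.card ι

def scatter [Fintype ι] (Z : Matrix ρ ι R) (c : ρ → R) : Matrix ρ ρ R :=
  (of fun i j => Z i j - c i) * (of fun i j => Z i j - c i)ᵀ

lemma scatter_fromCols [Fintype ι] [Fintype κ] (A : Matrix ρ ι R) (B : Matrix ρ κ R)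
    (c : ρ → R) : scatter (fromCols A B) c = scatter A c + scatter B c := by
  ext i i'
  simp [scatter, mul_apply, Fintype.sum_sum_type]

lemma scatter_mem_add_scatter_notMem [Fintype ι] [DecidableEq ι] (Z : Matrix ρ ι R)
    (c : ρ → R) (J : Finset ι) :
    scatter (Z.submatrix id (Subtype.val : {j // j ∈ J} → ι)) c +
      scatter (Z.submatrix id (Subtype.val : {j // j ∉ J} → ι)) c = scatter Z c := by
  ext i i'
  simp only [scatter, Matrix.add_apply, mul_apply, transpose_apply, of_apply, submatrix_apply,
    id_eq]
  convert Fintype.sum_subtype_add_sum_subtype (· ∈ J) fun j => (Z i j - c i) * (Z i' j - c i')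

variable [CharZero R]

lemma sum_sub_rowMean [Fintype ι] (Z : Matrix ρ ι R) (i : ρ) :
    ∑ j, (Z i j - rowMean Z i) = 0 := by
  obtain hι | hι := isEmpty_or_nonempty ι
  · simp
  · rw [sum_sub_distrib, sum_const, card_univ, nsmul_eq_mul, rowMean,
      mul_div_cancel₀ _ (Nat.cast_ne_zero.2 Fintype.card_ne_zero), sub_self]

lemma scatter_eq_scatter_rowMean_add [Fintype ι] (Z : Matrix ρ ι R) (c : ρ → R) :
    scatter Z c = scatter Z (rowMean Z) +
      (Fintype.card ι : R) • vecMulVec (rowMean Z - c) (rowMean Z - c) := by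
  ext i i'
  set μ := rowMean Z
  have hsplit : ∀ j, (Z i j - c i) * (Z i' j - c i') =
      (Z i j - μ i) * (Z i' j - μ i') + (μ i - c i) * (Z i' j - μ i') +
        (μ i' - c i') * (Z i j - μ i) + (μ i - c i) * (μ i' - c i') := fun j => by ring
  simp only [scatter, mul_apply, transpose_apply, of_apply, hsplit, sum_add_distrib, ← mul_sum,
    sum_sub_rowMean, Matrix.add_apply, Matrix.smul_apply, vecMulVec_apply, Pi.sub_apply,
    sum_const, card_univ, nsmul_eq_mul, smul_eq_mul, μ]
  ring

lemma scatter_rowMean_sub_scatter_rowMean [Fintype ι] [Fintype κ] (Z₁ : Matrix ρ ι R)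
    (Z₂ : Matrix ρ κ R) (hcard : Fintype.card ι = Fintype.card κ) (z : ρ → R)
    (hz : ∀ i, z i = (rowMean Z₁ i + rowMean Z₂ i) / 2) :
    scatter Z₂ (rowMean Z₂) - scatter Z₁ (rowMean Z₁) = scatter Z₂ z - scatter Z₁ z := by
  have hopp : rowMean Z₂ - z = -(rowMean Z₁ - z) := funext fun i => by
    simp only [Pi.sub_apply, Pi.neg_apply, hz]
    ring
  rw [scatter_eq_scatter_rowMean_add Z₁ z, scatter_eq_scatter_rowMean_add Z₂ z, hopp,
    neg_vecMulVec, vecMulVec_neg, neg_neg, hcard]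
  abel

end Scatter

lemma card_sub_one_smul_sampleCov {m : ℕ} [Fintype ι] (Z : Matrix (Fin m) ι ℝ) :
    ((Fintype.card ι : ℝ) - 1) • sampleCov Z = scatter Z (rowMean Z) := by
  change ((Fintype.card ι : ℝ) - 1) • ((Fintype.card ι : ℝ) - 1)⁻¹ • scatter Z (rowMean Z) = _
  obtain h | h := eq_or_ne (Fintype.card ι) 1
  · -- a single column is its own mean, so both sides vanish
    obtain ⟨_⟩ := Fintype.card_eq_one_iff_nonempty_unique.1 h
    have hcentered : (of fun i j => Z i j - rowMean Z i) = 0 := by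
      ext i j
      simp [rowMean, Subsingleton.elim j default]
    simp [scatter, hcentered]
  · exact smul_inv_smul₀ (sub_ne_zero.2 (by exact_mod_cast h)) _

theorem rank_k_mixed_update_downdate_equal_counts_general {m n k : ℕ}
    (X₁ : Matrix (Fin m) (Fin n) ℝ) (J : Finset (Fin n)) (hJ : J.card = k)
    (Yd : Matrix (Fin m) {j // j ∈ J} ℝ) (hYd : Yd = X₁.submatrix id Subtype.val)
    (Yu : Matrix (Fin m) (Fin k) ℝ)
    (X₂ : Matrix (Fin m) ({j // j ∉ J} ⊕ Fin k) ℝ)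
    (hX₂ : X₂ = Matrix.fromCols (X₁.submatrix id Subtype.val) Yu)
    (xbar₁ xbar₂ : Fin m → ℝ)
    (hxbar₁ : ∀ i, xbar₁ i = (∑ j, X₁ i j) / (n : ℝ))
    (hxbar₂ : ∀ i, xbar₂ i = (∑ j, X₂ i j) / (n : ℝ))
    (z : Fin m → ℝ) (hz : ∀ i, z i = (xbar₁ i + xbar₂ i) / 2)
    (Ku : Matrix (Fin m) (Fin k) ℝ) (hKu : Ku = Matrix.of fun i j => Yu i j - z i)
    (Kd : Matrix (Fin m) {j // j ∈ J} ℝ) (hKd : Kd = Matrix.of fun i j => Yd i j - z i) :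
    ((n : ℝ) - 1) • sampleCov X₂ =
      ((n : ℝ) - 1) • sampleCov X₁ + Ku * Kuᵀ - Kd * Kdᵀ := by
  have hcard₂ : Fintype.card ({j // j ∉ J} ⊕ Fin k) = n := by
    have := J.card_le_univ
    simp only [Fintype.card_sum, Fintype.card_subtype_compl, Fintype.card_coe, hJ,
      Fintype.card_fin] at this ⊢
    omega
  have hmean₁ : xbar₁ = rowMean X₁ := funext fun i => by simp [rowMean, hxbar₁]
  have hmean₂ : xbar₂ = rowMean X₂ := funext fun i => by simp [rowMean, hxbar₂, hcard₂]
  subst hmean₁ hmean₂ hKu hKd hYd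
  change _ = _ + scatter Yu z - scatter _ z
  have h₁ := card_sub_one_smul_sampleCov X₁
  have h₂ := card_sub_one_smul_sampleCov X₂
  rw [Fintype.card_fin] at h₁
  rw [hcard₂] at h₂
  rw [h₁, h₂, add_sub_assoc, ← sub_eq_iff_eq_add',
    scatter_rowMean_sub_scatter_rowMean X₁ X₂ (by rw [hcard₂, Fintype.card_fin]) z hz, hX₂,
    scatter_fromCols, ← scatter_mem_add_scatter_notMem X₁ z J]
  abel

/-- Rank-k mixed update/downdate with equal numbers of added and removed
columns, using z = (x̄₁ + x̄₂)/2. -/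
theorem rank_k_mixed_update_downdate_equal_counts {m n k : ℕ}
    (hn : 2 ≤ n) (hk : k < n)
    (X₁ : Matrix (Fin m) (Fin n) ℝ) (J : Finset (Fin n)) (hJ : J.card = k)
    (Yd : Matrix (Fin m) {j // j ∈ J} ℝ) (hYd : Yd = X₁.submatrix id Subtype.val)
    (Yu : Matrix (Fin m) (Fin k) ℝ)
    (X₂ : Matrix (Fin m) ({j // j ∉ J} ⊕ Fin k) ℝ)
    (hX₂ : X₂ = Matrix.fromCols (X₁.submatrix id Subtype.val) Yu)
    (xbar₁ xbar₂ : Fin m → ℝ)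
    (hxbar₁ : ∀ i, xbar₁ i = (∑ j, X₁ i j) / (n : ℝ))
    (hxbar₂ : ∀ i, xbar₂ i = (∑ j, X₂ i j) / (n : ℝ))
    (z : Fin m → ℝ) (hz : ∀ i, z i = (xbar₁ i + xbar₂ i) / 2)
    (Ku : Matrix (Fin m) (Fin k) ℝ) (hKu : Ku = Matrix.of fun i j => Yu i j - z i)
    (Kd : Matrix (Fin m) {j // j ∈ J} ℝ) (hKd : Kd = Matrix.of fun i j => Yd i j - z i) :
    ((n : ℝ) - 1) • sampleCov X₂ =
      ((n : ℝ) - 1) • sampleCov X₁ + Ku * Kuᵀ - Kd * Kdᵀ :=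
  rank_k_mixed_update_downdate_equal_counts_general X₁ J hJ Yd hYd Yu X₂ hX₂ xbar₁ xbar₂ hxbar₁
    hxbar₂ z hz Ku hKu Kd hKd
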